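/- Hölder-type average-trajectory bound: let T ≥ 1, a ≥ 1, and let d_0, …, d_T ≥ 0 and w_0, …, w_{T−1} ≥ 0 be real numbers with ∑_{t=0}^T d_t^a ≤ γ ∑_{t=0}^{T−1} w_t^b for some γ > 0 and 1 ≤ b ≤ a. If additionally ∑_{t=0}^{T−1} w_t ≤ ε, then (1/T) ∑_{t=0}^T d_t ≤ (γ/T)^{1/a} · ((T+1)/T)^{1−1/a} · ε^{b/a}. -/

import Mathlib

/-!
Superadditivity of `x ↦ x ^ b` turns the hypothesis into `∑ d_t ^ a ≤ γ ε ^ b`, and the power-mean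
inequality `∑ d_t ≤ (T + 1) ^ (1 - 1/a) (∑ d_t ^ a) ^ (1/a)` then gives the bound.
-/

open Finset

namespace Real

variable {ι : Type*} (s : Finset ι) {f : ι → ℝ} {p : ℝ}

theorem sum_rpow_le_rpow_sum (hf : ∀ i ∈ s, 0 ≤ f i) (hp : 1 ≤ p) :
    ∑ i ∈ s, f i ^ p ≤ (∑ i ∈ s, f i) ^ p := by
  induction s using Finset.cons_induction with
  | empty => simp [zero_rpow (by linarith : p ≠ 0)]
  | cons j s hj ih =>
    rw [sum_cons, sum_cons]
    have hfs : ∀ i ∈ s, 0 ≤ f i := fun i hi => hf i (mem_cons_of_mem hi)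
    calc f j ^ p + ∑ i ∈ s, f i ^ p ≤ f j ^ p + (∑ i ∈ s, f i) ^ p := by gcongr; exact ih hfs
      _ ≤ (f j + ∑ i ∈ s, f i) ^ p :=
        add_rpow_le_rpow_add (hf j (mem_cons_self j s)) (sum_nonneg hfs) hp

theorem sum_le_card_rpow_mul_rpow_sum_rpow (hf : ∀ i ∈ s, 0 ≤ f i) (hp : 1 ≤ p) :
    ∑ i ∈ s, f i ≤ (#s : ℝ) ^ (1 - 1 / p) * (∑ i ∈ s, f i ^ p) ^ (1 / p) := by
  have hp0 : 0 < p := by linarith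
  have hpow := rpow_sum_le_const_mul_sum_rpow_of_nonneg s hp hf
  have hroot := rpow_le_rpow (rpow_nonneg (sum_nonneg hf) p) hpow (one_div_nonneg.2 hp0.le)
  rwa [← rpow_mul (sum_nonneg hf), mul_one_div_cancel hp0.ne', rpow_one, mul_rpow (by positivity)
    (sum_nonneg fun i hi => rpow_nonneg (hf i hi) p), ← rpow_mul (Nat.cast_nonneg _),
    sub_mul, one_mul, mul_one_div_cancel hp0.ne'] at hroot

theorem div_rpow_mul_div_rpow_one_sub {x y T : ℝ} (hx : 0 ≤ x) (hy : 0 ≤ y) (hT : 0 < T) (r : ℝ) :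
    (x / T) ^ r * (y / T) ^ (1 - r) = 1 / T * (x ^ r * y ^ (1 - r)) := by
  have hTT : T ^ r * T ^ (1 - r) = T := by rw [← rpow_add hT, add_sub_cancel, rpow_one]
  rw [div_rpow hx hT.le, div_rpow hy hT.le, div_mul_div_comm, hTT, one_div_mul_eq_div]

end Real

theorem stmt17_general (T : ℕ) (hT : 1 ≤ T) (a b γ ε : ℝ)
    (ha : 1 ≤ a) (hb : 1 ≤ b) (hγ : 0 < γ) (hε : 0 ≤ ε)
    (d w : ℕ → ℝ)
    (hd : ∀ t, 0 ≤ d t) (hw : ∀ t, 0 ≤ w t)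
    (hsum : ∑ t ∈ Finset.range (T + 1), d t ^ a ≤
      γ * ∑ t ∈ Finset.range T, w t ^ b)
    (hwsum : ∑ t ∈ Finset.range T, w t ≤ ε) :
    (1 / (T : ℝ)) * ∑ t ∈ Finset.range (T + 1), d t ≤
      (γ / (T : ℝ)) ^ (1 / a) * (((T : ℝ) + 1) / (T : ℝ)) ^ (1 - 1 / a) *
        ε ^ (b / a) := by
  have hTpos : (0 : ℝ) < T := by exact_mod_cast hT
  have hw_pow : ∑ t ∈ range (T + 1), d t ^ a ≤ γ * ε ^ b :=
    calc _ ≤ γ * ∑ t ∈ range T, w t ^ b := hsum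
      _ ≤ γ * (∑ t ∈ range T, w t) ^ b := by
        gcongr; exact Real.sum_rpow_le_rpow_sum _ (fun t _ => hw t) hb
      _ ≤ γ * ε ^ b := by
        gcongr; exact sum_nonneg fun t _ => hw t
  have hd_sum := Real.sum_le_card_rpow_mul_rpow_sum_rpow (range (T + 1)) (fun t _ => hd t) ha
  rw [card_range, Nat.cast_succ] at hd_sum
  have hγε : (γ * ε ^ b) ^ (1 / a) = γ ^ (1 / a) * ε ^ (b / a) := by
    rw [Real.mul_rpow hγ.le (by positivity), ← Real.rpow_mul hε, mul_one_div]
  calc 1 / (T : ℝ) * ∑ t ∈ range (T + 1), d t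
      ≤ 1 / T * (((T : ℝ) + 1) ^ (1 - 1 / a) * (γ * ε ^ b) ^ (1 / a)) := by
        gcongr
        exact hd_sum.trans (by gcongr; exact sum_nonneg fun t _ => Real.rpow_nonneg (hd t) a)
    _ = _ := by
        rw [Real.div_rpow_mul_div_rpow_one_sub hγ.le (by positivity) hTpos, hγε]
        ring

/-- Hölder-type average-trajectory bound. -/
theorem stmt17 (T : ℕ) (hT : 1 ≤ T) (a b γ ε : ℝ)
    (ha : 1 ≤ a) (hb : 1 ≤ b) (hba : b ≤ a) (hγ : 0 < γ) (hε : 0 ≤ ε)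
    (d w : ℕ → ℝ)
    (hd : ∀ t, 0 ≤ d t) (hw : ∀ t, 0 ≤ w t)
    (hsum : ∑ t ∈ Finset.range (T + 1), d t ^ a ≤
      γ * ∑ t ∈ Finset.range T, w t ^ b)
    (hwsum : ∑ t ∈ Finset.range T, w t ≤ ε) :
    (1 / (T : ℝ)) * ∑ t ∈ Finset.range (T + 1), d t ≤
      (γ / (T : ℝ)) ^ (1 / a) * (((T : ℝ) + 1) / (T : ℝ)) ^ (1 - 1 / a) *
        ε ^ (b / a) :=
  stmt17_general T hT a b γ ε ha hb hγ hε d w hd hw hsum hwsum
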